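/- arXiv:1009.4249 — 3 statements merged into one kernel-verified Lean document; each statement's English description precedes it below -/
import Mathlib

section
/- Let k be a non-discrete Hausdorff topological field and k' a field. Let U be an open subset of k containing 0, and let f : k → k' be a function satisfying: (i) for all x, y ∈ k with x ∈ U, y ∈ U and x + y ∈ U one has f(x + y) = f(x) + f(y); (ii) for all x, y ∈ k with x ∈ U, y ∈ U and x·y ∈ U one has f(x·y) = f(x)·f(y); and (iii) f(x) ≠ 0 for every nonzero x ∈ U. Then there exists a unique ring homomorphism φ : k → k' such that φ(x) = f(x) for all x ∈ U. (This is the paper's key lemma that local field homomorphisms extend uniquely to global field homomorphisms.) -/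
/-!
For `x ∈ k` and every sufficiently small `t ≠ 0`, both `t` and `t * x` lie in `U`, and the
quotient `f (t * x) / f t` does not depend on `t`: two such quotients are compared through a
third, even smaller, scalar `u`, using `f u * f (t * x) = f (u * t * x) = f t * f (u * x)`.
This common value is the extension `φ x`; it is additive and multiplicative because a single
small `t` computes `φ x`, `φ y`, `φ (x + y)` and (with `t * t`) `φ (x * y)` at once.
Uniqueness holds because a ring homomorphism satisfies `φ x = φ (t * x) / φ t`.
-/

open Filter Topology

structure IsLocalFieldHom {k k' : Type*} [Field k] [Field k'] (U : Set k) (f : k → k') :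
    Prop where
  map_add : ∀ x y : k, x ∈ U → y ∈ U → x + y ∈ U → f (x + y) = f x + f y
  map_mul : ∀ x y : k, x ∈ U → y ∈ U → x * y ∈ U → f (x * y) = f x * f y
  map_ne_zero : ∀ x ∈ U, x ≠ 0 → f x ≠ 0

lemma eventually_mem_and_ne_zero_of_mem_nhds_zero {M : Type*} [Zero M] [TopologicalSpace M]
    {U : Set M} (hU : U ∈ 𝓝 0) : ∀ᶠ t in 𝓝[≠] 0, t ∈ U ∧ t ≠ 0 :=
  (eventually_nhdsWithin_of_eventually_nhds hU).and eventually_mem_nhdsWithin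

section Scaling

variable {M : Type*} [MulZeroClass M] [TopologicalSpace M] [ContinuousMul M] {U : Set M}

lemma eventually_mul_mem_of_mem_nhds_zero (hU : U ∈ 𝓝 0) (x : M) :
    ∀ᶠ t in 𝓝 0, t * x ∈ U := by
  have h : Tendsto (· * x) (𝓝 0) (𝓝 0) := by
    simpa using (tendsto_id (x := 𝓝 (0 : M))).mul_const x
  exact h.eventually_mem hU

lemma eventually_mul_mul_mem_of_mem_nhds_zero (hU : U ∈ 𝓝 0) (x y : M) :
    ∀ᶠ t in 𝓝 0, t * x * (t * y) ∈ U := by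
  have h : Tendsto (fun t ↦ t * x * (t * y)) (𝓝 0) (𝓝 0) := by
    simpa using ((tendsto_id (x := 𝓝 (0 : M))).mul_const x).mul
      ((tendsto_id (x := 𝓝 (0 : M))).mul_const y)
  exact h.eventually_mem hU

end Scaling

noncomputable def localExtension {k k' : Type*} [Field k] [Field k'] (U : Set k) (f : k → k')
    (x : k) : k' :=
  let t := Classical.epsilon fun t ↦ t ∈ U ∧ t ≠ 0 ∧ t * x ∈ U
  f (t * x) / f t

namespace IsLocalFieldHom

variable {k k' : Type*} [Field k] [Field k'] {U : Set k} {f : k → k'}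

lemma map_zero (hf : IsLocalFieldHom U f) (h0 : (0 : k) ∈ U) : f 0 = 0 := by
  simpa using hf.map_add 0 0 h0 h0 (by simpa using h0)

lemma div_eq_div (hf : IsLocalFieldHom U f) {x s u : k} (hs : s ∈ U) (hs0 : s ≠ 0)
    (hsx : s * x ∈ U) (hu : u ∈ U) (hu0 : u ≠ 0) (hux : u * x ∈ U) (husx : u * (s * x) ∈ U) :
    f (s * x) / f s = f (u * x) / f u := by
  have hsux : s * (u * x) ∈ U := by rwa [mul_left_comm]
  have key : f u * f (s * x) = f s * f (u * x) := by
    rw [← hf.map_mul u _ hu hsx husx, ← hf.map_mul s _ hs hux hsux, mul_left_comm]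
  rw [div_eq_div_iff (hf.map_ne_zero s hs hs0) (hf.map_ne_zero u hu hu0)]
  linear_combination key

variable [TopologicalSpace k] [ContinuousMul k] [(𝓝[≠] (0 : k)).NeBot]

lemma localExtension_eq_div (hf : IsLocalFieldHom U f) (hU : U ∈ 𝓝 0) {x s : k} (hs : s ∈ U)
    (hs0 : s ≠ 0) (hsx : s * x ∈ U) : localExtension U f x = f (s * x) / f s := by
  obtain ⟨ht, ht0, htx⟩ : _ ∧ _ ∧ _ :=
    Classical.epsilon_spec (p := fun t ↦ t ∈ U ∧ t ≠ 0 ∧ t * x ∈ U) ⟨s, hs, hs0, hsx⟩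
  obtain ⟨u, ⟨hu, hu0⟩, hux, husx, hutx⟩ := ((eventually_mem_and_ne_zero_of_mem_nhds_zero hU).and
    (nhdsWithin_le_nhds ((eventually_mul_mem_of_mem_nhds_zero hU x).and
      ((eventually_mul_mem_of_mem_nhds_zero hU (s * x)).and
        (eventually_mul_mem_of_mem_nhds_zero hU (_ * x)))))).exists
  rw [localExtension, hf.div_eq_div ht ht0 htx hu hu0 hux hutx,
    hf.div_eq_div hs hs0 hsx hu hu0 hux husx]

lemma localExtension_eq_of_mem (hf : IsLocalFieldHom U f) (hU : U ∈ 𝓝 0) {x : k} (hx : x ∈ U) :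
    localExtension U f x = f x := by
  obtain ⟨s, ⟨hs, hs0⟩, hsx⟩ := ((eventually_mem_and_ne_zero_of_mem_nhds_zero hU).and
    (nhdsWithin_le_nhds (eventually_mul_mem_of_mem_nhds_zero hU x))).exists
  rw [hf.localExtension_eq_div hU hs hs0 hsx, hf.map_mul s x hs hx hsx,
    mul_div_cancel_left₀ _ (hf.map_ne_zero s hs hs0)]

lemma localExtension_one (hf : IsLocalFieldHom U f) (hU : U ∈ 𝓝 0) :
    localExtension U f 1 = 1 := by
  obtain ⟨s, hs, hs0⟩ := (eventually_mem_and_ne_zero_of_mem_nhds_zero hU).exists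
  rw [hf.localExtension_eq_div hU hs hs0 (by rwa [mul_one]), mul_one,
    div_self (hf.map_ne_zero s hs hs0)]

lemma localExtension_add (hf : IsLocalFieldHom U f) (hU : U ∈ 𝓝 0) (x y : k) :
    localExtension U f (x + y) = localExtension U f x + localExtension U f y := by
  obtain ⟨t, ⟨ht, ht0⟩, htx, hty, htxy⟩ := ((eventually_mem_and_ne_zero_of_mem_nhds_zero hU).and
    (nhdsWithin_le_nhds ((eventually_mul_mem_of_mem_nhds_zero hU x).and
      ((eventually_mul_mem_of_mem_nhds_zero hU y).and
        (eventually_mul_mem_of_mem_nhds_zero hU (x + y)))))).exists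
  rw [hf.localExtension_eq_div hU ht ht0 htxy, hf.localExtension_eq_div hU ht ht0 htx,
    hf.localExtension_eq_div hU ht ht0 hty, mul_add,
    hf.map_add _ _ htx hty (by rwa [← mul_add]), add_div]

lemma localExtension_mul (hf : IsLocalFieldHom U f) (hU : U ∈ 𝓝 0) (x y : k) :
    localExtension U f (x * y) = localExtension U f x * localExtension U f y := by
  obtain ⟨t, ⟨ht, ht0⟩, htx, hty, htt, htxty⟩ :=
    ((eventually_mem_and_ne_zero_of_mem_nhds_zero hU).and
      (nhdsWithin_le_nhds ((eventually_mul_mem_of_mem_nhds_zero hU x).and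
        ((eventually_mul_mem_of_mem_nhds_zero hU y).and
          ((eventually_mul_mul_mem_of_mem_nhds_zero hU 1 1).and
            (eventually_mul_mul_mem_of_mem_nhds_zero hU x y)))))).exists
  simp only [mul_one] at htt
  have hxy : t * t * (x * y) = t * x * (t * y) := by ring
  rw [hf.localExtension_eq_div hU htt (mul_ne_zero ht0 ht0) (by rwa [hxy]),
    hf.localExtension_eq_div hU ht ht0 htx, hf.localExtension_eq_div hU ht ht0 hty, hxy,
    hf.map_mul _ _ htx hty htxty, hf.map_mul t t ht ht htt, mul_div_mul_comm]

noncomputable def toRingHom (hf : IsLocalFieldHom U f) (hU : U ∈ 𝓝 0) : k →+* k' where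
  toFun := localExtension U f
  map_one' := hf.localExtension_one hU
  map_mul' := hf.localExtension_mul hU
  map_zero' := by
    rw [hf.localExtension_eq_of_mem hU (mem_of_mem_nhds hU), hf.map_zero (mem_of_mem_nhds hU)]
  map_add' := hf.localExtension_add hU

lemma toRingHom_apply (hf : IsLocalFieldHom U f) (hU : U ∈ 𝓝 0) (x : k) :
    hf.toRingHom hU x = localExtension U f x :=
  rfl

lemma eq_toRingHom (hf : IsLocalFieldHom U f) (hU : U ∈ 𝓝 0) {φ : k →+* k'}
    (hφ : ∀ x ∈ U, φ x = f x) : φ = hf.toRingHom hU := by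
  ext x
  obtain ⟨s, ⟨hs, hs0⟩, hsx⟩ := ((eventually_mem_and_ne_zero_of_mem_nhds_zero hU).and
    (nhdsWithin_le_nhds (eventually_mul_mem_of_mem_nhds_zero hU x))).exists
  rw [toRingHom_apply, hf.localExtension_eq_div hU hs hs0 hsx, ← hφ s hs, ← hφ _ hsx,
    _root_.map_mul, mul_div_cancel_left₀ _ ((_root_.map_ne_zero φ).mpr hs0)]

end IsLocalFieldHom

lemma nhdsNE_zero_neBot_of_not_discreteTopology {G : Type*} [AddGroup G] [TopologicalSpace G]
    [IsTopologicalAddGroup G] (h : ¬ DiscreteTopology G) : (𝓝[≠] (0 : G)).NeBot :=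
  ⟨fun hbot ↦ h <| discreteTopology_iff_isOpen_singleton_zero.mpr <|
    (isOpen_singleton_iff_punctured_nhds 0).mpr hbot⟩

theorem local_field_hom_extends_general
    {k k' : Type*} [Field k] [Field k']
    [TopologicalSpace k] [IsTopologicalRing k]
    (hnd : ¬ DiscreteTopology k)
    (U : Set k) (hU : IsOpen U) (h0 : (0 : k) ∈ U)
    (f : k → k')
    (hadd : ∀ x y : k, x ∈ U → y ∈ U → x + y ∈ U → f (x + y) = f x + f y)
    (hmul : ∀ x y : k, x ∈ U → y ∈ U → x * y ∈ U → f (x * y) = f x * f y)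
    (hnz : ∀ x ∈ U, x ≠ 0 → f x ≠ 0) :
    ∃! φ : k →+* k', ∀ x ∈ U, φ x = f x := by
  have := nhdsNE_zero_neBot_of_not_discreteTopology hnd
  have hf : IsLocalFieldHom U f := ⟨hadd, hmul, hnz⟩
  have hU₀ : U ∈ 𝓝 0 := hU.mem_nhds h0
  exact ⟨hf.toRingHom hU₀, fun x hx ↦ hf.localExtension_eq_of_mem hU₀ hx,
    fun φ hφ ↦ hf.eq_toRingHom hU₀ hφ⟩

/-- Local field homomorphisms on a non-discrete Hausdorff topological field
extend uniquely to global field homomorphisms. -/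
theorem local_field_hom_extends
    {k k' : Type*} [Field k] [Field k']
    [TopologicalSpace k] [IsTopologicalRing k] [ContinuousInv₀ k] [T2Space k]
    (hnd : ¬ DiscreteTopology k)
    (U : Set k) (hU : IsOpen U) (h0 : (0 : k) ∈ U)
    (f : k → k')
    (hadd : ∀ x y : k, x ∈ U → y ∈ U → x + y ∈ U → f (x + y) = f x + f y)
    (hmul : ∀ x y : k, x ∈ U → y ∈ U → x * y ∈ U → f (x * y) = f x * f y)
    (hnz : ∀ x ∈ U, x ≠ 0 → f x ≠ 0) :
    ∃! φ : k →+* k', ∀ x ∈ U, φ x = f x :=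
  local_field_hom_extends_general hnd U hU h0 f hadd hmul hnz
end

section
/- Let k be a non-discrete Hausdorff topological field and k' a nontrivial commutative ring. If φ, ψ : k → k' are ring homomorphisms that agree on some nonempty open subset of k, then φ = ψ. -/
/-!
The equalizer of two ring homomorphisms out of a field is a subfield. If it contains a nonempty
open set, it is an open additive subgroup, and an open subfield `F` of a non-discrete topological
field is everything: for any `x`, some nonzero `t ∈ F` has `t * x ∈ F` as well, so
`x = t⁻¹ * (t * x) ∈ F`.
-/

open Topology

theorem exists_ne_zero_mem_of_isOpen {G : Type*} [AddGroup G] [TopologicalSpace G]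
    [IsTopologicalAddGroup G] (hnd : ¬ DiscreteTopology G) {V : Set G} (hV : IsOpen V)
    (h0 : (0 : G) ∈ V) : ∃ t ∈ V, t ≠ 0 := by
  by_contra! h
  have hV0 : V = {0} := Set.eq_singleton_iff_unique_mem.mpr ⟨h0, h⟩
  exact hnd (discreteTopology_of_isOpen_singleton_zero (hV0 ▸ hV))

theorem Subfield.eq_top_of_isOpen {K : Type*} [Field K] [TopologicalSpace K]
    [IsTopologicalRing K] (hnd : ¬ DiscreteTopology K) (F : Subfield K)
    (hF : IsOpen (F : Set K)) : F = ⊤ := by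
  refine eq_top_iff.mpr fun x _ => ?_
  have hV : IsOpen ((F : Set K) ∩ (· * x) ⁻¹' F) :=
    hF.inter (hF.preimage (continuous_mul_const x))
  obtain ⟨t, ⟨htF, htxF⟩, ht0⟩ :=
    exists_ne_zero_mem_of_isOpen hnd hV ⟨F.zero_mem, by simp [F.zero_mem]⟩
  have hx : x = t⁻¹ * (t * x) := (inv_mul_cancel_left₀ ht0 x).symm
  exact hx ▸ F.mul_mem (F.inv_mem htF) htxF

theorem ringHom_eq_of_eqOn_open_general
    {k k' : Type*} [Field k] [CommRing k']
    [TopologicalSpace k] [IsTopologicalRing k]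
    (hnd : ¬ DiscreteTopology k)
    (φ ψ : k →+* k') (U : Set k) (hU : IsOpen U) (hne : U.Nonempty)
    (hagree : ∀ x ∈ U, φ x = ψ x) :
    φ = ψ := by
  obtain ⟨u, hu⟩ := hne
  have hnhds : (φ.eqLocusField ψ : Set k) ∈ 𝓝 u :=
    Filter.mem_of_superset (hU.mem_nhds hu) hagree
  have hopen : IsOpen (φ.eqLocusField ψ : Set k) :=
    (φ.eqLocusField ψ).toAddSubgroup.isOpen_of_mem_nhds hnhds
  have htop : φ.eqLocusField ψ = ⊤ := Subfield.eq_top_of_isOpen hnd _ hopen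
  ext x
  exact RingHom.mem_eqLocusField.mp (htop ▸ Subfield.mem_top x)

/-- Ring homomorphisms out of a non-discrete Hausdorff topological field that
agree on a nonempty open set are equal. -/
theorem ringHom_eq_of_eqOn_open
    {k k' : Type*} [Field k] [CommRing k'] [Nontrivial k']
    [TopologicalSpace k] [IsTopologicalRing k] [ContinuousInv₀ k] [T2Space k]
    (hnd : ¬ DiscreteTopology k)
    (φ ψ : k →+* k') (U : Set k) (hU : IsOpen U) (hne : U.Nonempty)
    (hagree : ∀ x ∈ U, φ x = ψ x) :
    φ = ψ :=
  ringHom_eq_of_eqOn_open_general hnd φ ψ U hU hne hagree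
end

section
/- Let k be a non-discrete Hausdorff topological field and let U be a nonempty open subset of k. Then the subfield of k generated by U is all of k. -/
open Filter Topology

theorem exists_ne_zero_of_mem_nhds_zero {G : Type*} [AddGroup G] [TopologicalSpace G]
    [IsTopologicalAddGroup G] (hnd : ¬ DiscreteTopology G) {s : Set G} (hs : s ∈ 𝓝 0) :
    ∃ y ∈ s, y ≠ 0 := by
  by_contra! h
  refine hnd (discreteTopology_iff_isOpen_singleton_zero.mpr (isOpen_iff_mem_nhds.mpr ?_))
  rintro _ rfl
  exact mem_of_superset hs h

namespace Subfield

variable {k : Type*} [DivisionRing k] [TopologicalSpace k]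

theorem isOpen_of_mem_nhds [SeparatelyContinuousAdd k] (K : Subfield k) {a : k}
    (ha : (K : Set k) ∈ 𝓝 a) : IsOpen (K : Set k) :=
  K.toAddSubgroup.isOpen_of_mem_nhds ha

/-- Any `x` is `(x * y) * y⁻¹` for some `y ≠ 0` close enough to `0` that `y` and `x * y` lie in
`K`; such `y` exist because `0` is not isolated. -/
theorem eq_top_of_isOpen_s3 [IsTopologicalRing k] (hnd : ¬ DiscreteTopology k) (K : Subfield k)
    (hK : IsOpen (K : Set k)) : K = ⊤ := by
  refine eq_top_iff.mpr fun x _ ↦ ?_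
  have hK0 : (K : Set k) ∈ 𝓝 0 := hK.mem_nhds K.zero_mem
  have hxK0 : (x * ·) ⁻¹' K ∈ 𝓝 0 := (continuous_const_mul x).tendsto' 0 0 (mul_zero x) hK0
  obtain ⟨y, ⟨hyK, hxyK⟩, hy0⟩ := exists_ne_zero_of_mem_nhds_zero hnd (inter_mem hK0 hxK0)
  simpa [mul_assoc, mul_inv_cancel₀ hy0] using K.mul_mem hxyK (K.inv_mem hyK)

end Subfield

theorem subfield_closure_of_open_eq_top_general
    {k : Type*} [Field k]
    [TopologicalSpace k] [IsTopologicalRing k]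
    (hnd : ¬ DiscreteTopology k)
    (U : Set k) (hU : IsOpen U) (hne : U.Nonempty) :
    Subfield.closure U = ⊤ := by
  obtain ⟨u, hu⟩ := hne
  have hnhds : (Subfield.closure U : Set k) ∈ 𝓝 u :=
    mem_of_superset (hU.mem_nhds hu) Subfield.subset_closure
  exact (Subfield.closure U).eq_top_of_isOpen_s3 hnd (Subfield.isOpen_of_mem_nhds _ hnhds)

/-- In a non-discrete Hausdorff topological field, the subfield generated by any
nonempty open set is the whole field. -/
theorem subfield_closure_of_open_eq_top
    {k : Type*} [Field k]
    [TopologicalSpace k] [IsTopologicalRing k] [ContinuousInv₀ k] [T2Space k]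
    (hnd : ¬ DiscreteTopology k)
    (U : Set k) (hU : IsOpen U) (hne : U.Nonempty) :
    Subfield.closure U = ⊤ :=
  subfield_closure_of_open_eq_top_general hnd U hU hne
end
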